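/- Let Q ⊆ [0,1] be a set of thresholds containing its infimum. Then S ⊆ N is a robust convention with respect to Q (i.e., a convention for every q ∈ Q) if and only if S is inf(Q)-closed and sup(Q)-cohesive. -/

import Mathlib

/-! Cohesiveness is antitone and closedness monotone in the threshold, so being a convention for
every `q ∈ Q` reduces to the two extreme thresholds: closedness at `inf Q` is the instance
`q = inf Q ∈ Q`, and cohesiveness at `sup Q` follows by passing to the supremum in
`q * d_i ≤ |N_i ∩ S|`. -/

open Finset

/-- `S` is `q`-cohesive. -/
def Cohesive {V : Type*} [Fintype V] [DecidableEq V] (G : SimpleGraph V)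
    [DecidableRel G.Adj] (q : ℝ) (S : Finset V) : Prop :=
  ∀ i ∈ S, q * (G.degree i : ℝ) ≤ ((G.neighborFinset i ∩ S).card : ℝ)

/-- `S` is `q`-closed. -/
def Closed {V : Type*} [Fintype V] [DecidableEq V] (G : SimpleGraph V)
    [DecidableRel G.Adj] (q : ℝ) (S : Finset V) : Prop :=
  ∀ i ∉ S, ((G.neighborFinset i ∩ S).card : ℝ) < q * (G.degree i : ℝ)

/-- `S` is a convention for threshold `q`. -/
def Convention {V : Type*} [Fintype V] [DecidableEq V] (G : SimpleGraph V)
    [DecidableRel G.Adj] (q : ℝ) (S : Finset V) : Prop :=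
  Cohesive G q S ∧ Closed G q S

theorem Real.sSup_mul_le_of_forall_mul_le {Q : Set ℝ} {d c : ℝ} (hd : 0 ≤ d) (hc : 0 ≤ c)
    (h : ∀ q ∈ Q, q * d ≤ c) : sSup Q * d ≤ c := by
  -- `0 ≤ c` also covers empty or unbounded `Q`, where `sSup Q = 0`.
  rw [mul_comm, ← smul_eq_mul, ← Real.sSup_smul_of_nonneg hd]
  refine Real.sSup_le ?_ hc
  rintro _ ⟨q, hq, rfl⟩
  exact (mul_comm d q).trans_le (h q hq)

section

variable {V : Type*} [Fintype V] [DecidableEq V] {G : SimpleGraph V} [DecidableRel G.Adj]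
  {q q' : ℝ} {S : Finset V}

theorem Cohesive.anti (hqq' : q ≤ q') (h : Cohesive G q' S) : Cohesive G q S :=
  fun i hi => (mul_le_mul_of_nonneg_right hqq' (Nat.cast_nonneg _)).trans (h i hi)

theorem Closed.mono (hqq' : q ≤ q') (h : Closed G q S) : Closed G q' S :=
  fun i hi => (h i hi).trans_le (mul_le_mul_of_nonneg_right hqq' (Nat.cast_nonneg _))

theorem cohesive_sSup_iff {Q : Set ℝ} (hQ : BddAbove Q) :
    Cohesive G (sSup Q) S ↔ ∀ q ∈ Q, Cohesive G q S :=
  ⟨fun h _ hq => h.anti (le_csSup hQ hq), fun h i hi =>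
    Real.sSup_mul_le_of_forall_mul_le (Nat.cast_nonneg _) (Nat.cast_nonneg _)
      fun q hq => h q hq i hi⟩

theorem closed_sInf_iff {Q : Set ℝ} (hQ : BddBelow Q) (hInf : sInf Q ∈ Q) :
    Closed G (sInf Q) S ↔ ∀ q ∈ Q, Closed G q S :=
  ⟨fun h _ hq => h.mono (csInf_le hQ hq), fun h => h _ hInf⟩

end

theorem robust_convention_iff_infClosed_supCohesive_general
    {V : Type*} [Fintype V] [DecidableEq V] (G : SimpleGraph V) [DecidableRel G.Adj]
    (Q : Set ℝ) (hQsub : Q ⊆ Set.Icc (0 : ℝ) 1)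
    (hInf : sInf Q ∈ Q) (S : Finset V) :
    (∀ q ∈ Q, Convention G q S) ↔ (Closed G (sInf Q) S ∧ Cohesive G (sSup Q) S) := by
  rw [closed_sInf_iff (bddBelow_Icc.mono hQsub) hInf, cohesive_sSup_iff (bddAbove_Icc.mono hQsub),
    and_comm]
  exact forall₂_and

theorem robust_convention_iff_infClosed_supCohesive
    {V : Type*} [Fintype V] [DecidableEq V] (G : SimpleGraph V) [DecidableRel G.Adj]
    (hdeg : ∀ i : V, 1 ≤ G.degree i)
    (Q : Set ℝ) (hQsub : Q ⊆ Set.Icc (0 : ℝ) 1) (hQne : Q.Nonempty)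
    (hInf : sInf Q ∈ Q) (S : Finset V) :
    (∀ q ∈ Q, Convention G q S) ↔ (Closed G (sInf Q) S ∧ Cohesive G (sSup Q) S) :=
  robust_convention_iff_infClosed_supCohesive_general G Q hQsub hInf S
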